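/- arXiv:2002.06689 — 8 statements merged into one kernel-verified Lean document; each statement's English description precedes it below -/
import Mathlib

section
/- Let E be an infinite-dimensional normed space over ℝ and let m be a positive integer. The set NL(^m E; ℝ) of non-continuous m-linear forms on E is 2^{dim E}-lineable in L(^m E; ℝ); that is, NL(^m E; ℝ) ∪ {0} contains a linear subspace of L(^m E; ℝ) of dimension 2^{dim E}. -/
/-!
Split a Hamel basis of `E` as `(e (i, n))` with `i ∈ ι`, `n ∈ ℕ` and `#ι = dim E`. For
`g : ι → ℝ`, the functional sending `e (i, n)` to `n * ‖e (i, n)‖ * g i` is unbounded on the unit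
sphere as soon as `g ≠ 0`, so `g ↦` this functional embeds `ι → ℝ`, of dimension
`𝔠 ^ #ι = 2 ^ dim E`, into the discontinuous linear forms together with `0`. If `φ c = 1`, the
`m`-linear form `x ↦ ψ (x i) * ∏_{j ≠ i} φ (x j)` gives back `ψ` when every `x j` with `j ≠ i` is
frozen at `c`, so it is discontinuous whenever `ψ` is.
-/

universe u

open Cardinal Function

lemma Module.exists_basis_prod_nat {K : Type*} {V : Type u} [DivisionRing K] [AddCommGroup V]
    [Module K V] (hV : ¬FiniteDimensional K V) :
    ∃ (ι : Type u) (_ : Module.Basis (ι × ℕ) K V), Infinite ι ∧ #ι = Module.rank K V := by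
  obtain ⟨⟨ι, B⟩⟩ := Module.Free.exists_basis (R := K) (M := V)
  have hι : #ι = Module.rank K V := B.mk_eq_rank''
  have hιinf : ℵ₀ ≤ #ι := hι ▸ not_lt.mp (mt Module.rank_lt_aleph0_iff.mp hV)
  obtain ⟨q⟩ : Nonempty (ι ≃ ι × ℕ) := by
    rw [← Cardinal.eq, mk_prod, mk_nat, lift_aleph0, lift_uzero, mul_comm, aleph0_mul_eq hιinf]
  exact ⟨ι, B.reindex q, aleph0_le_mk_iff.mp hιinf, hι⟩

lemma rank_fun_real_eq_two_pow (ι : Type u) [Infinite ι] :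
    Module.rank ℝ (ι → ℝ) = 2 ^ #ι := by
  rw [rank_fun_infinite, mk_arrow, mk_real, lift_continuum, lift_uzero, ← two_power_aleph0,
    ← power_mul, aleph0_mul_eq (aleph0_le_mk ι)]

section

variable {E : Type*} [NormedAddCommGroup E] [NormedSpace ℝ E]

lemma LinearMap.not_continuous_of_forall_lt {f : E →ₗ[ℝ] ℝ} (h : ∀ C : ℝ, ∃ x, C * ‖x‖ < |f x|) :
    ¬Continuous f := fun hf => by
  obtain ⟨x, hx⟩ := h ‖(⟨f, hf⟩ : E →L[ℝ] ℝ)‖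
  exact hx.not_ge (ContinuousLinearMap.le_opNorm ⟨f, hf⟩ x)

variable {ι : Type*} (B : Module.Basis (ι × ℕ) ℝ E)

noncomputable def unboundedFunctionals : (ι → ℝ) →ₗ[ℝ] (E →ₗ[ℝ] ℝ) :=
  (B.constr ℝ).toLinearMap ∘ₗ
    LinearMap.pi fun p : ι × ℕ => ((p.2 : ℝ) * ‖B p‖) • LinearMap.proj p.1

lemma unboundedFunctionals_apply_basis (g : ι → ℝ) (i : ι) (n : ℕ) :
    unboundedFunctionals B g (B (i, n)) = n * ‖B (i, n)‖ * g i := by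
  simp [unboundedFunctionals, Module.Basis.constr_basis]

lemma unboundedFunctionals_injective : Injective (unboundedFunctionals B) := by
  refine (injective_iff_map_eq_zero _).mpr fun g hg => funext fun i => ?_
  have h := unboundedFunctionals_apply_basis B g i 1
  rw [hg] at h
  simpa [B.ne_zero] using h.symm

lemma not_continuous_unboundedFunctionals {g : ι → ℝ} (hg : g ≠ 0) :
    ¬Continuous (unboundedFunctionals B g) := by
  obtain ⟨i, hi⟩ := Function.ne_iff.mp hg
  refine LinearMap.not_continuous_of_forall_lt fun C => ?_
  obtain ⟨n, hn⟩ := exists_nat_gt (C / |g i|)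
  refine ⟨B (i, n), ?_⟩
  have hgi : 0 < |g i| := abs_pos.mpr hi
  have hB : 0 < ‖B (i, n)‖ := norm_pos_iff.mpr (B.ne_zero _)
  rw [unboundedFunctionals_apply_basis, abs_mul, abs_mul, Nat.abs_cast, abs_norm]
  calc C * ‖B (i, n)‖ < n * |g i| * ‖B (i, n)‖ :=
        mul_lt_mul_of_pos_right ((div_lt_iff₀ hgi).mp hn) hB
    _ = n * ‖B (i, n)‖ * |g i| := by ring

end

section

variable {R E : Type*} [CommRing R] [AddCommGroup E] [Module R E] {m : ℕ}

noncomputable def MultilinearMap.prodUpdate (φ : E →ₗ[R] R) (i : Fin m) :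
    (E →ₗ[R] R) →ₗ[R] MultilinearMap R (fun _ : Fin m => E) R :=
  (MultilinearMap.compLinearMapMultilinear.toLinearMap (fun _ => φ) i).flip
    (MultilinearMap.mkPiAlgebra R (Fin m) R)

lemma MultilinearMap.prodUpdate_apply (φ ψ : E →ₗ[R] R) (i : Fin m) (x : Fin m → E) :
    prodUpdate φ i ψ x = ∏ j, update (fun _ => φ) i ψ j (x j) := by
  simp [prodUpdate]

lemma MultilinearMap.prodUpdate_apply_update {φ : E →ₗ[R] R} {c : E} (hc : φ c = 1)
    (i : Fin m) (ψ : E →ₗ[R] R) (y : E) :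
    prodUpdate φ i ψ (update (fun _ => c) i y) = ψ y := by
  rw [prodUpdate_apply, Fintype.prod_eq_single i fun j hj => by simp [hj, hc]]
  simp

lemma MultilinearMap.prodUpdate_injective {φ : E →ₗ[R] R} {c : E} (hc : φ c = 1)
    (i : Fin m) : Injective (prodUpdate φ i) := fun ψ ψ' h => LinearMap.ext fun y => by
  rw [← prodUpdate_apply_update hc i ψ y, h, prodUpdate_apply_update hc]

end

section

variable {E : Type*} [NormedAddCommGroup E] [NormedSpace ℝ E] {m : ℕ} {φ : E →ₗ[ℝ] ℝ} {c : E}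

lemma MultilinearMap.continuous_of_continuous_prodUpdate (hc : φ c = 1) (i : Fin m)
    {ψ : E →ₗ[ℝ] ℝ} (h : Continuous (prodUpdate φ i ψ)) : Continuous ψ := by
  classical
  have : ⇑ψ = fun y => prodUpdate φ i ψ (update (fun _ => c) i y) :=
    funext fun y => (prodUpdate_apply_update hc i ψ y).symm
  rw [this]
  exact h.comp (continuous_const.update i continuous_id)

end

/-- For an infinite-dimensional real normed space `E` and a positive integer `m`,
the set `NL(^m E; ℝ)` of non-continuous `m`-linear forms on `E` is `2 ^ dim E`-lineable in
`L(^m E; ℝ)`: there exists a linear subspace of the space of all `m`-linear forms, of Hamel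
dimension `2 ^ dim E`, all of whose nonzero elements are non-continuous. -/
theorem statement0 (E : Type u) [NormedAddCommGroup E] [NormedSpace ℝ E]
    (hE : ¬FiniteDimensional ℝ E) (m : ℕ) (hm : 0 < m) :
    ∃ S : Submodule ℝ (MultilinearMap ℝ (fun _ : Fin m => E) ℝ),
      Module.rank ℝ ↥S = 2 ^ Module.rank ℝ E ∧
      ∀ T ∈ S, T ≠ 0 → ¬Continuous ⇑T := by
  obtain ⟨ι, B, hι, hrank⟩ := Module.exists_basis_prod_nat hE
  obtain ⟨i⟩ := hι.nonempty
  have hc : B.coord (i, 0) (B (i, 0)) = 1 := by simp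
  set L := MultilinearMap.prodUpdate _ ⟨0, hm⟩ ∘ₗ unboundedFunctionals B
  have hL : Injective L :=
    (MultilinearMap.prodUpdate_injective hc _).comp (unboundedFunctionals_injective B)
  refine ⟨LinearMap.range L, ?_, ?_⟩
  · rw [rank_range_of_injective L hL, rank_fun_real_eq_two_pow, hrank]
  · rintro _ ⟨g, rfl⟩ hT hcont
    have hg : g ≠ 0 := by rintro rfl; exact hT (map_zero L)
    exact not_continuous_unboundedFunctionals B hg
      (MultilinearMap.continuous_of_continuous_prodUpdate hc _ hcont)
end

section
/- If E is an infinite-dimensional Banach space over ℝ, then the cardinality of E equals the Hamel dimension of E, i.e. card(E) = dim(E). -/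
/-!
An infinite-dimensional normed space has an infinite-dimensional dual, and a linearly independent
sequence of continuous functionals `f n` yields vectors `x n` with `f k (x n) = 0` for `k < n`,
`f n (x n) ≠ 0` and `‖x n‖ ≤ 2⁻ⁿ`. By completeness `g t = ∑ tⁿ • x n` converges for `t ∈ [-1, 1]`.
Applying the `f k` to a linear relation `∑ aⱼ • g tⱼ = 0` gives a lower-triangular system with
nonzero diagonal for the moments `∑ aⱼ tⱼⁿ`, so they all vanish and, by Lagrange interpolation,
so do the `aⱼ`. Thus `dim E ≥ 𝔠`, and counting finitely supported coordinates gives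
`#E = max (dim E) 𝔠 = dim E`.
-/

open Cardinal

universe v

theorem Cardinal.mk_eq_rank_of_lift_mk_le_rank {K : Type u} {V : Type v} [DivisionRing K]
    [AddCommGroup V] [Module K V] (hV : ℵ₀ ≤ Module.rank K V)
    (hK : lift.{v} #K ≤ lift.{u} (Module.rank K V)) : #V = Module.rank K V := by
  let b := Module.Basis.ofVectorSpace K V
  have : Infinite (Module.Basis.ofVectorSpaceIndex K V) := by
    rwa [infinite_iff, b.mk_eq_rank'']
  have hcard := lift_mk_eq'.mpr ⟨b.repr.toEquiv⟩
  rw [mk_finsupp_lift_of_infinite, b.mk_eq_rank'', lift_max, lift_lift, lift_lift,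
    max_eq_left (by rwa [lift_umax.{v, u}])] at hcard
  exact lift_inj.{v, u}.mp (by simpa using hcard)

theorem exists_linearIndependent_nat {K V : Type*} [DivisionRing K] [AddCommGroup V] [Module K V]
    (hV : ¬Module.Finite K V) : ∃ v : ℕ → V, LinearIndependent K v := by
  let b := Module.Basis.ofVectorSpace K V
  have : Infinite (Module.Basis.ofVectorSpaceIndex K V) :=
    not_finite_iff_infinite.mp fun _ ↦ hV (.of_basis b)
  exact ⟨_, b.linearIndependent.comp _ (Infinite.natEmbedding _).injective⟩

theorem LinearIndependent.exists_apply_eq_zero_of_lt_apply_ne_zero {K V : Type*} [Field K]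
    [AddCommGroup V] [Module K V] {L : ℕ → V →ₗ[K] K} (hL : LinearIndependent K L) (n : ℕ) :
    ∃ x, (∀ k < n, L k x = 0) ∧ L n x ≠ 0 := by
  by_contra! h
  have hker : ⨅ k : Set.Iio n, LinearMap.ker (L k) ≤ LinearMap.ker (L n) := fun x hx ↦
    h x fun k hk ↦ (Submodule.mem_iInf _).mp hx ⟨k, hk⟩
  have hspan := mem_span_of_iInf_ker_le_ker hker
  rw [← Set.image_eq_range] at hspan
  exact hL.notMem_span_image Set.self_notMem_Iio hspan

theorem not_finiteDimensional_strongDual {𝕜 E : Type*} [RCLike 𝕜] [NormedAddCommGroup E]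
    [NormedSpace 𝕜 E] (hE : ¬FiniteDimensional 𝕜 E) : ¬FiniteDimensional 𝕜 (StrongDual 𝕜 E) :=
  fun _ ↦ hE <| .of_injective (NormedSpace.inclusionInDoubleDualLi 𝕜).toLinearMap
    (NormedSpace.inclusionInDoubleDualLi 𝕜).injective

open Polynomial in
theorem linearIndependent_fun_pow {K : Type*} [Field K] :
    LinearIndependent K (fun (t : K) (n : ℕ) ↦ t ^ n) := by
  classical
  rw [linearIndependent_iff']
  intro s a hsum i hi
  let ℓ : K[X] →ₗ[K] K := ∑ t ∈ s, a t • leval t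
  have hℓ : ℓ = 0 := lhom_ext' fun n ↦ LinearMap.ext_ring <| by
    simpa [ℓ, mul_comm] using congrFun hsum n
  have hℓi : ℓ (Lagrange.basis s id i) = a i := by
    rw [LinearMap.sum_apply, Finset.sum_eq_single i (fun j hj hji ↦ ?_) (absurd hi)]
    · have : eval i (Lagrange.basis s id i) = 1 := Lagrange.eval_basis_self (Set.injOn_id _) hi
      simp [this]
    · have : eval j (Lagrange.basis s id i) = 0 := Lagrange.eval_basis_of_ne (v := id) hji.symm hj
      simp [this]
  rw [← hℓi, hℓ, LinearMap.zero_apply]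

section LowerTriangular

open Finset

def lowerTriangularMulVec {R : Type*} [CommRing R] (M : ℕ → ℕ → R) : (ℕ → R) →ₗ[R] ℕ → R where
  toFun m k := ∑ n ∈ range (k + 1), M k n * m n
  map_add' m m' := by ext k; simp only [Pi.add_apply, mul_add, Finset.sum_add_distrib]
  map_smul' c m := by ext k; simp [mul_sum, mul_left_comm]

theorem ker_lowerTriangularMulVec {R : Type*} [CommRing R] [NoZeroDivisors R] {M : ℕ → ℕ → R}
    (hM : ∀ n, M n n ≠ 0) : LinearMap.ker (lowerTriangularMulVec M) = ⊥ := by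
  refine LinearMap.ker_eq_bot'.mpr fun m hm ↦ funext fun k ↦ show m k = 0 from ?_
  induction k using Nat.strong_induction_on with
  | _ k ih =>
    have hk : ∑ n ∈ range (k + 1), M k n * m n = 0 := congrFun hm k
    rw [sum_range_succ, sum_eq_zero fun n hn ↦ by rw [ih n (mem_range.mp hn), mul_zero],
      zero_add] at hk
    exact (mul_eq_zero.mp hk).resolve_left (hM k)

theorem linearIndependent_tsum_pow_smul {𝕜 E : Type*} [Field 𝕜] [TopologicalSpace 𝕜] [T2Space 𝕜]
    [AddCommGroup E] [Module 𝕜 E] [TopologicalSpace E] {f : ℕ → E →L[𝕜] 𝕜} {x : ℕ → E}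
    (hfx : ∀ k n, k < n → f k (x n) = 0) (hdiag : ∀ n, f n (x n) ≠ 0) {S : Set 𝕜}
    (hS : ∀ t ∈ S, Summable fun n ↦ t ^ n • x n) :
    LinearIndependent 𝕜 (fun t : S ↦ ∑' n, (t : 𝕜) ^ n • x n) := by
  let Φ : E →ₗ[𝕜] ℕ → 𝕜 := LinearMap.pi fun k ↦ (f k : E →ₗ[𝕜] 𝕜)
  have hΦ : Φ ∘ (fun t : S ↦ ∑' n, (t : 𝕜) ^ n • x n) =
      lowerTriangularMulVec (fun k n ↦ f k (x n)) ∘ fun (t : S) (n : ℕ) ↦ (t : 𝕜) ^ n := by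
    funext t k
    have hvanish : ∀ n ∉ range (k + 1), (t : 𝕜) ^ n * f k (x n) = 0 := fun n hn ↦ by
      rw [hfx k n (by simpa using hn), mul_zero]
    calc f k (∑' n, (t : 𝕜) ^ n • x n) = ∑' n, (t : 𝕜) ^ n * f k (x n) := by
          simp [(f k).map_tsum (hS t t.2)]
      _ = ∑ n ∈ range (k + 1), f k (x n) * (t : 𝕜) ^ n := by
          rw [tsum_eq_sum hvanish]; simp only [mul_comm]
  refine LinearIndependent.of_comp Φ ?_
  rw [hΦ]
  exact ((linearIndependent_fun_pow (K := 𝕜)).comp ((↑) : S → 𝕜) Subtype.val_injective).map' _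
    (ker_lowerTriangularMulVec hdiag)

end LowerTriangular

theorem exists_triangular_seq {𝕜 E : Type*} [RCLike 𝕜] [NormedAddCommGroup E] [NormedSpace 𝕜 E]
    (hE : ¬FiniteDimensional 𝕜 E) :
    ∃ (f : ℕ → StrongDual 𝕜 E) (x : ℕ → E), (∀ n, ‖x n‖ ≤ 2⁻¹ ^ n) ∧
      (∀ k n, k < n → f k (x n) = 0) ∧ ∀ n, f n (x n) ≠ 0 := by
  obtain ⟨f, hf⟩ := exists_linearIndependent_nat (not_finiteDimensional_strongDual hE)
  have hf' : LinearIndependent 𝕜 fun n ↦ (f n : E →ₗ[𝕜] 𝕜) :=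
    hf.map' (ContinuousLinearMap.coeLM 𝕜)
      (LinearMap.ker_eq_bot.mpr ContinuousLinearMap.coe_injective)
  choose y hy0 hy using hf'.exists_apply_eq_zero_of_lt_apply_ne_zero
  simp only [ContinuousLinearMap.coe_coe] at hy0 hy
  have hy_ne (n : ℕ) : y n ≠ 0 := fun h ↦ hy n (by simp [h])
  refine ⟨f, fun n ↦ ((2⁻¹ ^ n / ‖y n‖ : ℝ) : 𝕜) • y n, fun n ↦ ?_, fun k n hkn ↦ ?_, fun n ↦ ?_⟩
  · rw [norm_smul, RCLike.norm_ofReal, abs_of_nonneg (by positivity),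
      div_mul_cancel₀ _ (norm_ne_zero_iff.mpr (hy_ne n))]
  · simp [hy0 n k hkn]
  · simp [hy n, hy_ne n]

theorem continuum_le_rank_of_not_finiteDimensional {E : Type*} [NormedAddCommGroup E]
    [NormedSpace ℝ E] [CompleteSpace E] (hE : ¬FiniteDimensional ℝ E) :
    𝔠 ≤ Module.rank ℝ E := by
  obtain ⟨f, x, hx, hfx, hdiag⟩ := exists_triangular_seq hE
  have hsum (t : ℝ) (ht : t ∈ Set.Icc (-1) 1) : Summable fun n ↦ t ^ n • x n := by
    refine .of_norm_bounded (summable_geometric_of_lt_one (r := 2⁻¹) (by norm_num) (by norm_num))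
      fun n ↦ ?_
    rw [norm_smul, norm_pow, Real.norm_eq_abs]
    have htn : |t| ^ n ≤ 1 := pow_le_one₀ (abs_nonneg t) (abs_le.mpr ht)
    exact (mul_le_of_le_one_left (norm_nonneg _) htn).trans (hx n)
  simpa [mk_Icc_real] using (linearIndependent_tsum_pow_smul hfx hdiag hsum).cardinal_lift_le_rank

/-- If `E` is an infinite-dimensional real Banach space, then the cardinality of
`E` equals its Hamel dimension: `card E = dim E`. -/
theorem statement1 (E : Type u) [NormedAddCommGroup E] [NormedSpace ℝ E] [CompleteSpace E]
    (hE : ¬FiniteDimensional ℝ E) :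
    Cardinal.mk E = Module.rank ℝ E := by
  have hcont := continuum_le_rank_of_not_finiteDimensional hE
  exact mk_eq_rank_of_lift_mk_le_rank (aleph0_le_continuum.trans hcont)
    (by simpa [mk_real] using hcont)
end

section
/- Let E be an infinite-dimensional normed space over ℝ, let F be a nonzero normed space over ℝ, and let m be a positive integer. Then card(L(^m E; F)) = (card F)^{dim E}. -/
/-!
Fix a basis `(b i)_{i ∈ ι}` of `E`. A multilinear map in `m` variables is determined by its values on
`ι^m`, and `#(ι^m) = #ι` because `ι` is infinite and `m ≥ 1`; this gives the upper bound. Conversely,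
every `f : ι → F` extends to a multilinear map taking the value `f i` at `(b i, b i₀, …, b i₀)`,
which gives the lower bound.
-/

universe u v

open Cardinal

namespace Module.Basis

variable {R : Type*} {ι E : Type u} {F : Type v} [CommSemiring R] [AddCommMonoid E] [Module R E]
  [AddCommMonoid F] [Module R F]

theorem injective_eval_multilinearMap (b : Basis ι R E) (κ : Type*) [Finite κ] :
    Function.Injective fun (f : MultilinearMap R (fun _ : κ => E) F) (v : κ → ι) => f (b ∘ v) :=
  fun _ _ hfg => ext_multilinear (fun _ => b) fun v => congrFun hfg v

/-- The multilinear map `v ↦ (∏ i, b.coord i₀ (v i.succ)) • b.constr R f (v 0)`. -/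
noncomputable def multilinearExtend (b : Basis ι R E) (i₀ : ι) (n : ℕ) (f : ι → F) :
    MultilinearMap R (fun _ : Fin (n + 1) => E) F :=
  ((MultilinearMap.compLinearMapₗ fun _ => b.coord i₀) ∘ₗ
    (MultilinearMap.piRingEquiv (ι := Fin n)).toLinearMap ∘ₗ b.constr R f).uncurryLeft

theorem multilinearExtend_apply_cons (b : Basis ι R E) (i₀ : ι) (n : ℕ) (f : ι → F) (i : ι) :
    b.multilinearExtend i₀ n f (Fin.cons (b i) fun _ => b i₀) = f i := by
  simp [multilinearExtend, MultilinearMap.piRingEquiv]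

theorem multilinearExtend_injective (b : Basis ι R E) (i₀ : ι) (n : ℕ) :
    Function.Injective (b.multilinearExtend (F := F) i₀ n) := fun f g hfg => funext fun i => by
  rw [← b.multilinearExtend_apply_cons i₀ n f, ← b.multilinearExtend_apply_cons i₀ n g, hfg]

theorem mk_multilinearMap (b : Basis ι R E) [Infinite ι] (n : ℕ) :
    #(MultilinearMap R (fun _ : Fin (n + 1) => E) F) = lift.{u} #F ^ lift.{v} #ι := by
  have h_index : #(Fin (n + 1) → ι) = #ι := by
    rw [mk_arrow, mk_fin, lift_natCast, lift_id', power_natCast]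
    exact power_nat_eq (aleph0_le_mk ι) n.succ_pos
  apply le_antisymm
  · calc #(MultilinearMap R (fun _ : Fin (n + 1) => E) F)
        ≤ #((Fin (n + 1) → ι) → F) := mk_le_of_injective (b.injective_eval_multilinearMap _)
      _ = lift.{u} #F ^ lift.{v} #ι := by rw [mk_arrow, h_index]
  · obtain ⟨i₀⟩ := ‹Infinite ι›.nonempty
    rw [← mk_arrow]
    exact mk_le_of_injective (b.multilinearExtend_injective i₀ n)

end Module.Basis

theorem statement2_general (E : Type u) (F : Type v) [NormedAddCommGroup E] [NormedSpace ℝ E]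
    [NormedAddCommGroup F] [NormedSpace ℝ F]
    (hE : ¬FiniteDimensional ℝ E) (m : ℕ) (hm : 0 < m) :
    Cardinal.mk (MultilinearMap ℝ (fun _ : Fin m => E) F) =
      Cardinal.lift.{u} (Cardinal.mk F) ^ Cardinal.lift.{v} (Module.rank ℝ E) := by
  obtain ⟨n, rfl⟩ : ∃ n, m = n + 1 := ⟨m - 1, (Nat.succ_pred_eq_of_pos hm).symm⟩
  let b := Module.Free.chooseBasis ℝ E
  have : Infinite (Module.Free.ChooseBasisIndex ℝ E) := by
    rw [← not_finite_iff_infinite]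
    exact fun _ => hE (Module.Finite.of_basis b)
  rw [b.mk_multilinearMap, Module.Free.rank_eq_card_chooseBasisIndex]

/-- For an infinite-dimensional real normed space `E`, a nonzero real normed space
`F` and a positive integer `m`, the cardinality of the space `L(^m E; F)` of all `m`-linear
operators from `E × ⋯ × E` to `F` is `(card F) ^ (dim E)` (cardinal exponentiation, with
universe lifts to compare cardinals). -/
theorem statement2 (E : Type u) (F : Type v) [NormedAddCommGroup E] [NormedSpace ℝ E]
    [NormedAddCommGroup F] [NormedSpace ℝ F] [Nontrivial F]
    (hE : ¬FiniteDimensional ℝ E) (m : ℕ) (hm : 0 < m) :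
    Cardinal.mk (MultilinearMap ℝ (fun _ : Fin m => E) F) =
      Cardinal.lift.{u} (Cardinal.mk F) ^ Cardinal.lift.{v} (Module.rank ℝ E) :=
  statement2_general E F hE m hm
end

section
/- Let E be an infinite-dimensional Banach space over ℝ and let m be a positive integer. Then the Hamel dimension of L(^m E; ℝ) equals 2^{dim E}; in particular dim L(^m E; ℝ) = card(L(^m E; ℝ)) = 𝔠^{dim E} = 2^{dim E}. -/
/-!
An `m`-linear form on `E` is the same as a linear form on `⨂^m E`, which has a basis indexed by
`m`-tuples of a Hamel basis of `E`; so the forms correspond to arbitrary real functions on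
`ι^m`, where `#ι = dim E`. For infinite `ι` we have `#(ι^m) = #ι`, and by Erdős–Kaplansky the
space `ι → ℝ` has dimension equal to its cardinality `𝔠 ^ dim E = 2 ^ dim E`.
-/

universe u v w

open Cardinal Module

theorem Cardinal.continuum_power_eq_two_power {κ : Cardinal} (h : ℵ₀ ≤ κ) : 𝔠 ^ κ = 2 ^ κ := by
  rw [← two_power_aleph0, ← power_mul, aleph0_mul_eq h]

noncomputable def Module.Basis.multilinearMapEquivFun {ι R N : Type*} [CommSemiring R] [Finite ι]
    {M : ι → Type*} [∀ i, AddCommMonoid (M i)] [∀ i, Module R (M i)] [AddCommMonoid N] [Module R N]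
    {κ : ι → Type*} (b : ∀ i, Basis (κ i) R (M i)) :
    MultilinearMap R M N ≃ₗ[R] ((∀ i, κ i) → N) :=
  PiTensorProduct.lift ≪≫ₗ ((Basis.piTensorProduct b).constr R).symm

section

variable {K : Type v} {V : Type w} [Field K] [AddCommGroup V] [Module K V] {m : ℕ}

theorem rank_multilinearMap_fin_eq_mk_of_aleph0_le_rank (hm : 0 < m)
    (hV : ℵ₀ ≤ Module.rank K V) :
    Module.rank K (MultilinearMap K (fun _ : Fin m => V) K) =
      #(MultilinearMap K (fun _ : Fin m => V) K) := by
  let b := Basis.ofVectorSpace K V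
  have : Infinite (Basis.ofVectorSpaceIndex K V) := by
    rwa [← aleph0_le_mk_iff, b.mk_eq_rank'']
  have : Nonempty (Fin m) := ⟨⟨0, hm⟩⟩
  let e := Basis.multilinearMapEquivFun (N := K) fun _ : Fin m => b
  rw [e.rank_eq, e.toEquiv.cardinal_eq, rank_fun_infinite]

theorem mk_multilinearMap_fin_of_aleph0_le_rank (hm : 0 < m) (hV : ℵ₀ ≤ Module.rank K V) :
    #(MultilinearMap K (fun _ : Fin m => V) K) = lift.{w} #K ^ lift.{v} (Module.rank K V) := by
  let b := Basis.ofVectorSpace K V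
  rw [(Basis.multilinearMapEquivFun fun _ : Fin m => b).toEquiv.cardinal_eq, mk_arrow,
    mk_arrow, ← b.mk_eq_rank'', mk_fin, lift_natCast, lift_uzero, power_natCast,
    power_nat_eq (b.mk_eq_rank'' ▸ hV) hm]

end

theorem statement3_general (E : Type u) [NormedAddCommGroup E] [NormedSpace ℝ E]
    (hE : ¬FiniteDimensional ℝ E) (m : ℕ) (hm : 0 < m) :
    Module.rank ℝ (MultilinearMap ℝ (fun _ : Fin m => E) ℝ) = 2 ^ Module.rank ℝ E ∧
    Cardinal.mk (MultilinearMap ℝ (fun _ : Fin m => E) ℝ) = 2 ^ Module.rank ℝ E ∧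
    Cardinal.continuum ^ Module.rank ℝ E = 2 ^ Module.rank ℝ E := by
  have hdim : ℵ₀ ≤ Module.rank ℝ E := not_lt.mp (mt Module.rank_lt_aleph0_iff.mp hE)
  have hcard : #(MultilinearMap ℝ (fun _ : Fin m => E) ℝ) = 2 ^ Module.rank ℝ E := by
    rw [mk_multilinearMap_fin_of_aleph0_le_rank hm hdim, mk_real, lift_continuum, lift_uzero,
      continuum_power_eq_two_power hdim]
  exact ⟨(rank_multilinearMap_fin_eq_mk_of_aleph0_le_rank hm hdim).trans hcard, hcard,
    continuum_power_eq_two_power hdim⟩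

/-- For an infinite-dimensional real Banach space `E` and a positive integer `m`,
the Hamel dimension of `L(^m E; ℝ)` equals `2 ^ dim E`; in particular
`dim L(^m E; ℝ) = card (L(^m E; ℝ)) = 𝔠 ^ dim E = 2 ^ dim E`. -/
theorem statement3 (E : Type u) [NormedAddCommGroup E] [NormedSpace ℝ E] [CompleteSpace E]
    (hE : ¬FiniteDimensional ℝ E) (m : ℕ) (hm : 0 < m) :
    Module.rank ℝ (MultilinearMap ℝ (fun _ : Fin m => E) ℝ) = 2 ^ Module.rank ℝ E ∧
    Cardinal.mk (MultilinearMap ℝ (fun _ : Fin m => E) ℝ) = 2 ^ Module.rank ℝ E ∧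
    Cardinal.continuum ^ Module.rank ℝ E = 2 ^ Module.rank ℝ E :=
  statement3_general E hE m hm
end

section
/- Let E be an infinite-dimensional normed space over ℝ, let F be a nonzero normed space over ℝ, and let m be a positive integer. The set NL(^m E; F) of non-continuous m-linear operators is max{2^{dim E}, dim F}-lineable in L(^m E; F). -/
/-!
Choose a Hamel basis of `E` and index it by `Option ι × ℕ`, where `ι` is the original index set,
which is infinite. Prescribing the value `(n + 1) ‖b (o, n)‖ • u o` on the basis vector `b (o, n)`
turns every `u : Option ι → F` into a linear map `E → F`, injectively and linearly in `u`, and the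
map is unbounded as soon as `u ≠ 0`. The space `F × (ι → ℝ)`, of dimension
`dim F + 2 ^ dim E`, embeds linearly into `Option ι → F` via `(v', g) ↦ (v', (g i • v)ᵢ)` for a
fixed `v ≠ 0`. Finally a linear map `L` becomes the `(k + 1)`-linear map
`x ↦ f(x₀) ⋯ f(xₖ₋₁) • L xₖ` for a functional `f` with `f e = 1`; fixing the first `k` arguments to
`e` recovers `L`, so this lift is injective and preserves discontinuity.
-/

universe u v

open Cardinal Module

theorem Cardinal.nonempty_equiv_option_prod_nat (ι : Type*) [Infinite ι] :
    Nonempty (ι ≃ Option ι × ℕ) := by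
  have h : ℵ₀ ≤ #ι := aleph0_le_mk ι
  refine Cardinal.eq.mp ?_
  rw [mk_prod, mk_option, lift_uzero, mk_nat, lift_aleph0, add_one_eq h, mul_aleph0_eq h]

theorem Real.rank_fun_infinite (ι : Type*) [Infinite ι] : Module.rank ℝ (ι → ℝ) = 2 ^ #ι := by
  rw [_root_.rank_fun_infinite, mk_arrow, mk_real, lift_continuum, lift_uzero,
    ← two_power_aleph0, ← power_mul, aleph0_mul_eq (aleph0_le_mk ι)]

section PiOption
variable {K F : Type*} [Field K] [AddCommGroup F] [Module K F] {ι : Type*}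

def LinearMap.piOptionSmulRight (v : F) : F × (ι → K) →ₗ[K] (Option ι → F) :=
  (LinearEquiv.piOptionEquivProd K).symm.toLinearMap ∘ₗ
    LinearMap.id.prodMap ((LinearMap.toSpanSingleton K F v).compLeft ι)

theorem LinearMap.piOptionSmulRight_injective {v : F} (hv : v ≠ 0) :
    Function.Injective (piOptionSmulRight v : F × (ι → K) →ₗ[K] (Option ι → F)) := by
  rw [piOptionSmulRight, LinearMap.coe_comp]
  exact (LinearEquiv.injective _).comp <|
    Function.injective_id.prodMap (smul_left_injective K hv).comp_left

end PiOption

namespace Module.Basis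
variable {E F κ : Type*} [NormedAddCommGroup E] [NormedSpace ℝ E]
  [NormedAddCommGroup F] [NormedSpace ℝ F] (b : Basis (κ × ℕ) ℝ E)

/-- The factor `‖b p‖` compensates for `b` not being normalized, and `n + 1` makes the image of
`u` unbounded along `b (k, ·)` whenever `u k ≠ 0`. -/
noncomputable def unboundedConstr : (κ → F) →ₗ[ℝ] E →ₗ[ℝ] F :=
  (b.constr ℝ).toLinearMap ∘ₗ LinearMap.pi fun p => ((p.2 + 1 : ℝ) * ‖b p‖) • LinearMap.proj p.1

theorem unboundedConstr_apply_basis (u : κ → F) (p : κ × ℕ) :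
    b.unboundedConstr u (b p) = ((p.2 + 1 : ℝ) * ‖b p‖) • u p.1 := by
  simp [unboundedConstr]

theorem unboundedConstr_injective :
    Function.Injective (b.unboundedConstr : (κ → F) → E →ₗ[ℝ] F) := by
  refine (injective_iff_map_eq_zero _).mpr fun u hu => funext fun k => ?_
  have h := b.unboundedConstr_apply_basis u (k, 0)
  rw [hu] at h
  have hcoef : ((0 : ℕ) + 1 : ℝ) * ‖b (k, 0)‖ ≠ 0 := by simpa using b.ne_zero (k, 0)
  exact (smul_eq_zero.mp h.symm).resolve_left hcoef

theorem not_continuous_unboundedConstr {u : κ → F} (hu : u ≠ 0) :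
    ¬Continuous (b.unboundedConstr u) := by
  intro hcont
  obtain ⟨k, hk⟩ := Function.ne_iff.mp hu
  have huk : 0 < ‖u k‖ := norm_pos_iff.mpr hk
  obtain ⟨C, -, hC⟩ := SemilinearMapClass.bound_of_continuous (b.unboundedConstr u) hcont
  obtain ⟨n, hn⟩ := exists_nat_gt (C / ‖u k‖)
  rw [div_lt_iff₀ huk] at hn
  have hbn : 0 < ‖b (k, n)‖ := norm_pos_iff.mpr (b.ne_zero _)
  have h := hC (b (k, n))
  rw [unboundedConstr_apply_basis, _root_.norm_smul, Real.norm_of_nonneg (by positivity)] at h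
  have hle : (n + 1 : ℝ) * ‖u k‖ ≤ C := le_of_mul_le_mul_right (by linarith) hbn
  nlinarith

end Module.Basis

section MultilinearLift
variable {R E F : Type*} [CommSemiring R] [AddCommMonoid E] [Module R E]
  [AddCommMonoid F] [Module R F] {k : ℕ}

def MultilinearMap.smulRightUncurry (Q : MultilinearMap R (fun _ : Fin k => E) R) :
    (E →ₗ[R] F) →ₗ[R] MultilinearMap R (fun _ : Fin (k + 1) => E) F where
  toFun L := (Q.smulRight L).uncurryRight
  map_add' L L' := by ext x; simp [smul_add]
  map_smul' c L := by ext x; simp [smul_comm c]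

namespace MultilinearMap.smulRightUncurry
variable {Q : MultilinearMap R (fun _ : Fin k => E) R} {e : E}

theorem apply_snoc (hQ : Q (fun _ => e) = 1) (L : E →ₗ[R] F) (z : E) :
    smulRightUncurry Q L (Fin.snoc (fun _ => e) z) = L z := by
  simp [smulRightUncurry, Fin.init_snoc, hQ]

theorem injective (hQ : Q (fun _ => e) = 1) :
    Function.Injective (smulRightUncurry Q : (E →ₗ[R] F) → _) := by
  intro L L' h
  ext z
  rw [← apply_snoc hQ L, ← apply_snoc hQ L', h]

theorem continuous_of_continuous [TopologicalSpace E] [TopologicalSpace F]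
    (hQ : Q (fun _ => e) = 1) {L : E →ₗ[R] F} (h : Continuous (smulRightUncurry Q L)) :
    Continuous L := by
  have hL : ⇑L = smulRightUncurry Q L ∘ fun z => Fin.snoc (fun _ => e) z :=
    funext fun z => (apply_snoc hQ L z).symm
  rw [hL]
  exact h.comp (continuous_const.finSnoc continuous_id)

end MultilinearMap.smulRightUncurry
end MultilinearLift

/-- For an infinite-dimensional real normed space `E`, a nonzero real normed space
`F` and a positive integer `m`, the set `NL(^m E; F)` of non-continuous `m`-linear operators is
`max {2 ^ dim E, dim F}`-lineable in `L(^m E; F)` (universe lifts are used to compare the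
cardinals). -/
theorem statement4 (E : Type u) (F : Type v) [NormedAddCommGroup E] [NormedSpace ℝ E]
    [NormedAddCommGroup F] [NormedSpace ℝ F] [Nontrivial F]
    (hE : ¬FiniteDimensional ℝ E) (m : ℕ) (hm : 0 < m) :
    ∃ S : Submodule ℝ (MultilinearMap ℝ (fun _ : Fin m => E) F),
      Module.rank ℝ ↥S =
        max (Cardinal.lift.{v} (2 ^ Module.rank ℝ E)) (Cardinal.lift.{u} (Module.rank ℝ F)) ∧
      ∀ T ∈ S, T ≠ 0 → ¬Continuous ⇑T := by
  obtain ⟨k, rfl⟩ := Nat.exists_eq_add_one_of_ne_zero hm.ne'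
  obtain ⟨v, hv⟩ := exists_ne (0 : F)
  set b₀ := Basis.ofVectorSpace ℝ E
  have hrank : #(Basis.ofVectorSpaceIndex ℝ E) = Module.rank ℝ E := b₀.mk_eq_rank''
  have hE' : ℵ₀ ≤ Module.rank ℝ E := not_lt.mp (mt Module.rank_lt_aleph0_iff.mp hE)
  have : Infinite (Basis.ofVectorSpaceIndex ℝ E) := by rwa [Cardinal.infinite_iff, hrank]
  obtain ⟨e⟩ := Cardinal.nonempty_equiv_option_prod_nat (Basis.ofVectorSpaceIndex ℝ E)
  obtain ⟨i⟩ : Nonempty (Basis.ofVectorSpaceIndex ℝ E) := inferInstance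
  set Q := (MultilinearMap.mkPiAlgebra ℝ (Fin k) ℝ).compLinearMap fun _ => b₀.coord i
  have hQ : Q (fun _ => b₀ i) = 1 := by simp [Q]
  set J := MultilinearMap.smulRightUncurry Q ∘ₗ (b₀.reindex e).unboundedConstr ∘ₗ
    LinearMap.piOptionSmulRight v
  have hJ : Function.Injective J := (MultilinearMap.smulRightUncurry.injective hQ).comp <|
    (b₀.reindex e).unboundedConstr_injective.comp (LinearMap.piOptionSmulRight_injective hv)
  refine ⟨LinearMap.range J, ?_, ?_⟩
  · have h2E : ℵ₀ ≤ lift.{v} (2 ^ Module.rank ℝ E) :=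
      aleph0_le_lift.mpr (hE'.trans (cantor _).le)
    rw [rank_range_of_injective J hJ, rank_prod, Real.rank_fun_infinite, hrank, add_comm,
      add_eq_max h2E]
  · rintro _ ⟨w, rfl⟩ hw hcont
    refine (b₀.reindex e).not_continuous_unboundedConstr ?_
      (MultilinearMap.smulRightUncurry.continuous_of_continuous hQ hcont)
    rintro h
    exact hw (by simp [J, h])
end

section
/- Let E be an infinite-dimensional normed space over ℝ, F a normed space over ℝ, and n a positive integer. Let T_1, …, T_n ∈ NL(E; F) be linearly independent non-continuous linear operators such that span(T_1, …, T_n) ⊆ NL(E; F) ∪ {0}. If the intersection K = ⋂_{i=1}^n Ker T_i is nontrivial and infinite-dimensional, with dim K = γ, then there exists a linear subspace S of L(E; F) such that span(T_1, …, T_n) ⊆ S ⊆ NL(E; F) ∪ {0} and dim S ≥ max{2^γ, dim F}. -/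
/-!
Write `K = ⋂ ker Tᵢ`. Being infinite-dimensional, `K` has a basis `b` indexed by `ι × ℕ` with
`#ι = dim K`; fix a linear projection `π` of `E` onto `K`. For `h : ι → F` let `Φ h` be `π` followed
by the map sending `b (a, m)` to `m ‖b (a, m)‖ • h a`. Then `Φ` is injective, and for `h a ≠ 0` the
vectors `b (a, m)` show that `Φ h` is unbounded on `K`. Every operator in `span Tᵢ` vanishes on `K`,
so `S = span Tᵢ ⊔ range Φ` consists of discontinuous operators besides `0`, and
`dim S ≥ dim (ι → F) ≥ max (2 ^ #ι) (dim F)`, the first bound by Erdős–Kaplansky.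
-/

universe w

open Cardinal Function

theorem Module.exists_basis_prod_nat_s7 {R : Type w} [DivisionRing R] {M : Type v} [AddCommGroup M]
    [Module R M] (hM : ℵ₀ ≤ Module.rank R M) :
    ∃ (ι : Type v) (_ : Module.Basis (ι × ℕ) R M), #ι = Module.rank R M := by
  obtain ⟨⟨ι, b⟩⟩ := Module.Free.exists_basis (R := R) (M := M)
  have hι : ℵ₀ ≤ #ι := b.mk_eq_rank'' ▸ hM
  have hprod : #(ι × ℕ) = #ι := by
    rw [mk_prod, mk_nat, lift_aleph0, lift_uzero, mul_aleph0_eq hι]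
  exact ⟨ι, b.reindex (Cardinal.eq.mp hprod).some.symm, b.mk_eq_rank''⟩

theorem Module.lift_rank_le_rank_fun {R : Type w} [Ring R] {ι : Type u} [Nonempty ι]
    {F : Type v} [AddCommGroup F] [Module R F] :
    lift.{u} (Module.rank R F) ≤ Module.rank R (ι → F) := by
  have := (LinearMap.pi fun _ : ι => (LinearMap.id : F →ₗ[R] F)).lift_rank_le_of_injective
    fun _ _ h => congrFun h (Classical.arbitrary ι)
  rwa [lift_umax.{v, u}, lift_id'.{v, u}] at this

theorem Module.lift_two_pow_le_rank_fun {R : Type w} [DivisionRing R] {ι : Type u} [Infinite ι]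
    {F : Type v} [AddCommGroup F] [Module R F] [Nontrivial F] :
    lift.{v} (2 ^ #ι) ≤ Module.rank R (ι → F) := by
  obtain ⟨y, hy⟩ := exists_ne (0 : F)
  have hinj := (LinearMap.pi fun a : ι =>
    (LinearMap.toSpanSingleton R F y).comp (LinearMap.proj a)).lift_rank_le_of_injective
    fun g g' h => funext fun a => smul_left_injective R hy (congrFun h a)
  rw [rank_fun_infinite] at hinj
  have htwo : lift.{w} (2 ^ #ι) ≤ #(ι → R) := by
    rw [mk_arrow, lift_power, lift_two]
    exact power_le_power_right (two_le_iff.mpr ⟨0, 1, zero_ne_one⟩)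
  rw [← lift_le.{max u w}, lift_lift]
  calc lift.{max u v w} (2 ^ #ι) = lift.{max u v} (lift.{w} (2 ^ #ι)) := by rw [lift_lift]
    _ ≤ lift.{max u v} #(ι → R) := lift_le.mpr htwo
    _ ≤ _ := hinj

section Unbounded

variable {E F : Type*} [SeminormedAddCommGroup E] [SeminormedAddCommGroup F]

def UnboundedOn (f : E → F) (s : Set E) : Prop :=
  ∀ M : ℝ, ∃ x ∈ s, M * ‖x‖ < ‖f x‖

theorem UnboundedOn.congr {f g : E → F} {s : Set E} (hf : UnboundedOn f s) (hfg : s.EqOn f g) :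
    UnboundedOn g s := fun M => by
  obtain ⟨x, hx, hMx⟩ := hf M
  exact ⟨x, hx, hfg hx ▸ hMx⟩

variable {𝕜 : Type*} [NontriviallyNormedField 𝕜] [NormedSpace 𝕜 E] [NormedSpace 𝕜 F]

theorem UnboundedOn.not_continuous {U : E →ₗ[𝕜] F} {s : Set E} (hU : UnboundedOn U s) :
    ¬Continuous U :=
  fun hc => by
    obtain ⟨C, -, hC⟩ := SemilinearMapClass.bound_of_continuous U hc
    obtain ⟨x, -, hx⟩ := hU C
    exact (hC x).not_gt hx

theorem not_continuous_of_mem_sup {V W : Submodule 𝕜 (E →ₗ[𝕜] F)} {s : Set E}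
    (hVs : ∀ R ∈ V, ∀ x ∈ s, R x = 0) (hV : ∀ R ∈ V, R ≠ 0 → ¬Continuous R)
    (hW : ∀ U ∈ W, U ≠ 0 → UnboundedOn U s) : ∀ R ∈ V ⊔ W, R ≠ 0 → ¬Continuous R := by
  intro R hR hR0
  obtain ⟨R₁, hR₁, U, hU, rfl⟩ := Submodule.mem_sup.mp hR
  by_cases hU0 : U = 0
  · subst hU0
    simpa using hV R₁ hR₁ (by simpa using hR0)
  · refine ((hW U hU hU0).congr fun x hx => ?_).not_continuous
    simp [hVs R₁ hR₁ x hx]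

end Unbounded

theorem Submodule.exists_linearMap_apply_basis {K E F G : Type*} [Field K] [AddCommGroup E]
    [Module K E] [AddCommGroup F] [Module K F] [AddCommGroup G] [Module K G]
    (p : Submodule K E) {κ : Type*} (b : Module.Basis κ K p) (L : G →ₗ[K] κ → F) :
    ∃ Φ : G →ₗ[K] E →ₗ[K] F, ∀ g k, Φ g (b k) = L g k := by
  obtain ⟨π, hπ⟩ := LinearMap.exists_leftInverse_of_injective p.subtype p.ker_subtype
  refine ⟨LinearMap.lcomp K F π ∘ₗ (b.constr K).toLinearMap ∘ₗ L, fun g k => ?_⟩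
  have : π (b k) = b k := LinearMap.congr_fun hπ (b k)
  simp [LinearMap.lcomp_apply, this]

theorem LinearMap.apply_eq_zero_of_mem_span_range_of_mem_iInf_ker {R M N ι : Type*}
    [CommSemiring R] [AddCommMonoid M] [Module R M] [AddCommMonoid N] [Module R N]
    {T : ι → M →ₗ[R] N} {f : M →ₗ[R] N} (hf : f ∈ Submodule.span R (Set.range T)) {x : M}
    (hx : x ∈ ⨅ i, LinearMap.ker (T i)) : f x = 0 := by
  have : Submodule.span R (Set.range T) ≤ LinearMap.ker (LinearMap.applyₗ x) :=
    Submodule.span_le.mpr <| by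
      rintro _ ⟨i, rfl⟩
      exact (Submodule.mem_iInf _).mp hx i
  exact this hf

variable {E F : Type*} [NormedAddCommGroup E] [NormedAddCommGroup F] [NormedSpace ℝ F]

theorem unboundedOn_of_apply_eq_nat_mul_norm_smul {U : E → F} {s : Set E}
    {v : F} (hv : v ≠ 0) (x : ℕ → E) (hxs : ∀ m, x m ∈ s) (hx : ∀ m, x m ≠ 0)
    (hUx : ∀ m, U (x m) = (m * ‖x m‖) • v) : UnboundedOn U s := fun M => by
  have hv' : 0 < ‖v‖ := norm_pos_iff.mpr hv
  obtain ⟨m, hm⟩ := exists_nat_gt (M / ‖v‖)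
  refine ⟨x m, hxs m, ?_⟩
  rw [hUx, norm_smul, Real.norm_of_nonneg (by positivity)]
  have := norm_pos_iff.mpr (hx m)
  rw [div_lt_iff₀ hv'] at hm
  nlinarith

variable [NormedSpace ℝ E]

theorem exists_injective_forall_unboundedOn {ι : Type*} (K : Submodule ℝ E)
    (b : Module.Basis (ι × ℕ) ℝ K) :
    ∃ Φ : (ι → F) →ₗ[ℝ] E →ₗ[ℝ] F, Injective Φ ∧ ∀ h ≠ 0, UnboundedOn (Φ h) K := by
  have hb : ∀ p, (b p : E) ≠ 0 := fun p => by simpa using b.ne_zero p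
  obtain ⟨Φ, hΦ⟩ := K.exists_linearMap_apply_basis b <|
    LinearMap.pi fun p : ι × ℕ => (p.2 * ‖(b p : E)‖) • (LinearMap.proj p.1 : (ι → F) →ₗ[ℝ] F)
  simp only [LinearMap.pi_apply, LinearMap.smul_apply, LinearMap.proj_apply] at hΦ
  refine ⟨Φ, (injective_iff_map_eq_zero Φ).mpr fun h h0 => funext fun a => ?_,
    fun h hh => ?_⟩
  · have := hΦ h (a, 1)
    rw [h0, LinearMap.zero_apply, eq_comm, smul_eq_zero] at this
    exact this.resolve_left (by simpa using hb (a, 1))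
  · obtain ⟨a, ha⟩ := Function.ne_iff.mp hh
    exact unboundedOn_of_apply_eq_nat_mul_norm_smul ha (fun m => b (a, m)) (fun m => (b _).2)
      (fun m => hb _) (fun m => hΦ h (a, m))

theorem statement7_general (E : Type u) (F : Type v) [NormedAddCommGroup E] [NormedSpace ℝ E]
    [NormedAddCommGroup F] [NormedSpace ℝ F]
    (n : ℕ) (hn : 0 < n)
    (T : Fin n → (E →ₗ[ℝ] F)) (hTind : LinearIndependent ℝ T)
    (hTnc : ∀ R ∈ Submodule.span ℝ (Set.range T), R ≠ 0 → ¬Continuous ⇑R)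
    (hKinf : ¬FiniteDimensional ℝ ↥(⨅ i, LinearMap.ker (T i))) :
    ∃ S : Submodule ℝ (E →ₗ[ℝ] F),
      Submodule.span ℝ (Set.range T) ≤ S ∧
      (∀ R ∈ S, R ≠ 0 → ¬Continuous ⇑R) ∧
      max (Cardinal.lift.{v} (2 ^ Module.rank ℝ ↥(⨅ i, LinearMap.ker (T i))))
          (Cardinal.lift.{u} (Module.rank ℝ F)) ≤ Module.rank ℝ ↥S := by
  set K := ⨅ i, LinearMap.ker (T i)
  have hK : ℵ₀ ≤ Module.rank ℝ K := not_lt.mp (mt Module.rank_lt_aleph0_iff.mp hKinf)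
  have : Nontrivial F := by
    obtain ⟨x, hx⟩ := DFunLike.ne_iff.mp (hTind.ne_zero ⟨0, hn⟩)
    exact nontrivial_of_ne _ _ hx
  obtain ⟨ι, b, hι⟩ := Module.exists_basis_prod_nat_s7 hK
  have : Infinite ι := aleph0_le_mk_iff.mp (hι ▸ hK)
  obtain ⟨Φ, hΦinj, hΦ⟩ := exists_injective_forall_unboundedOn (F := F) K b
  refine ⟨Submodule.span ℝ (Set.range T) ⊔ LinearMap.range Φ, le_sup_left, ?_, ?_⟩
  · refine not_continuous_of_mem_sup
      (fun R hR x hx => LinearMap.apply_eq_zero_of_mem_span_range_of_mem_iInf_ker hR hx) hTnc ?_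
    rintro _ ⟨h, rfl⟩ hh
    exact hΦ h (by rintro rfl; exact hh (map_zero Φ))
  · calc _ ≤ Module.rank ℝ (ι → F) :=
          max_le (hι ▸ Module.lift_two_pow_le_rank_fun) Module.lift_rank_le_rank_fun
      _ = Module.rank ℝ (LinearMap.range Φ) := (LinearEquiv.ofInjective Φ hΦinj).rank_eq
      _ ≤ _ := Submodule.rank_mono le_sup_right

/-- Let `E` be an infinite-dimensional real normed space, `F` a real normed space
and `n` a positive integer. Let `T₁, …, Tₙ` be linearly independent non-continuous linear
operators from `E` to `F` whose span is contained in `NL(E; F) ∪ {0}`. If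
`K = ⋂ i, ker Tᵢ` is nontrivial and infinite-dimensional, with `dim K = γ`, then there is a
subspace `S` of `L(E; F)` with `span(T₁, …, Tₙ) ⊆ S ⊆ NL(E; F) ∪ {0}` and
`dim S ≥ max {2 ^ γ, dim F}` (with universe lifts to compare cardinals). -/
theorem statement7 (E : Type u) (F : Type v) [NormedAddCommGroup E] [NormedSpace ℝ E]
    [NormedAddCommGroup F] [NormedSpace ℝ F]
    (hE : ¬FiniteDimensional ℝ E) (n : ℕ) (hn : 0 < n)
    (T : Fin n → (E →ₗ[ℝ] F)) (hTind : LinearIndependent ℝ T)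
    (hTnc : ∀ R ∈ Submodule.span ℝ (Set.range T), R ≠ 0 → ¬Continuous ⇑R)
    (hKne : (⨅ i, LinearMap.ker (T i)) ≠ ⊥)
    (hKinf : ¬FiniteDimensional ℝ ↥(⨅ i, LinearMap.ker (T i))) :
    ∃ S : Submodule ℝ (E →ₗ[ℝ] F),
      Submodule.span ℝ (Set.range T) ≤ S ∧
      (∀ R ∈ S, R ≠ 0 → ¬Continuous ⇑R) ∧
      max (Cardinal.lift.{v} (2 ^ Module.rank ℝ ↥(⨅ i, LinearMap.ker (T i))))
          (Cardinal.lift.{u} (Module.rank ℝ F)) ≤ Module.rank ℝ ↥S :=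
  statement7_general E F n hn T hTind hTnc hKinf
end

section
/- Let E and F be normed spaces over ℝ with 𝔠 < dim E and dim F > 2^{dim E}, and let m be a positive integer. Then the set NL(^m E; F) is (γ, dim F)-lineable in L(^m E; F) for every cardinal γ < dim E. -/
universe w u v

/-- A subset `A` of a real vector space `V` is `β`-lineable if `A ∪ {0}` contains a linear
subspace of `V` of Hamel dimension `β`. -/
def Lineable {V : Type w} [AddCommGroup V] [Module ℝ V] (A : Set V) (β : Cardinal.{w}) : Prop :=
  ∃ S : Submodule ℝ V, Module.rank ℝ ↥S = β ∧ (S : Set V) ⊆ A ∪ {0}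

/-- A subset `A` of a real vector space `V` is `(α, β)`-lineable if `A` is `α`-lineable and
every subspace `W ⊆ A ∪ {0}` with `dim W = α` is contained in a subspace `S` with `dim S = β`
and `W ⊆ S ⊆ A ∪ {0}`. -/
def ABLineable {V : Type w} [AddCommGroup V] [Module ℝ V] (A : Set V)
    (α β : Cardinal.{w}) : Prop :=
  Lineable A α ∧
  ∀ W : Submodule ℝ V, Module.rank ℝ ↥W = α → (W : Set V) ⊆ A ∪ {0} →
    ∃ S : Submodule ℝ V, W ≤ S ∧ Module.rank ℝ ↥S = β ∧ (S : Set V) ⊆ A ∪ {0}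

/-! The continuous `m`-linear maps form a subspace `C` of `L(^m E; F)` whose set-theoretic
complement is `NL(^m E; F)`, so a subspace lies in `NL(^m E; F) ∪ {0}` iff it meets `C` trivially.
If `β` is infinite and `dim W < β ≤ dim (L(^m E; F) / C)` for such a `W`, then a complement `D` of
`W ⊕ C` has dimension at least `β`, and `W ⊕ U` for any `U ≤ D` of dimension `β` is the required
extension of `W`.

It remains to see `dim F ≤ dim (L(^m E; F) / C)`. As `E` is infinite dimensional it carries a
discontinuous linear functional `ψ`; multiplying `ψ` in one variable by a continuous functional in
the others gives a discontinuous scalar `m`-linear map `μ`, and `v ↦ μ(·) v` embeds `F` into the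
quotient because `φ ∘ (μ(·) v) = μ` for a continuous `φ` with `φ v = 1`. -/

open Cardinal

namespace Submodule

variable {K V : Type*} [DivisionRing K] [AddCommGroup V] [Module K V]

theorem exists_le_rank_eq (D : Submodule K V) {c : Cardinal} (hc : c ≤ Module.rank K D) :
    ∃ U ≤ D, Module.rank K U = c := by
  obtain ⟨b, hbD, hspan, hb⟩ := exists_linearIndependent K (D : Set V)
  replace hb : LinearIndepOn K id b := hb
  rw [span_eq] at hspan
  rw [← hspan, rank_span_set hb] at hc
  obtain ⟨p, hpb, rfl⟩ := le_mk_iff_exists_subset.1 hc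
  exact ⟨span K p, span_le.2 (hpb.trans hbD), rank_span_set (hb.mono hpb)⟩

theorem exists_le_rank_eq_disjoint {C W : Submodule K V} {β : Cardinal} (hWC : Disjoint W C)
    (hW : Module.rank K W < β) (hβ : ℵ₀ ≤ β) (hβC : β ≤ Module.rank K (V ⧸ C)) :
    ∃ S, W ≤ S ∧ Module.rank K S = β ∧ Disjoint S C := by
  obtain ⟨D, hD⟩ := (W ⊔ C).exists_isCompl
  have hquot : Module.rank K (V ⧸ C) ≤ Module.rank K W + Module.rank K D := calc
    Module.rank K (V ⧸ C) = Module.rank K ((W ⊔ D).map C.mkQ) := by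
      rw [(map_mkQ_eq_top _ _).2 (by rw [← sup_assoc, sup_comm C W, hD.sup_eq_top]), rank_top]
    _ ≤ Module.rank K (W ⊔ D : Submodule K V) := rank_map_le _ _
    _ ≤ Module.rank K W + Module.rank K D := rank_add_le_rank_add_rank W D
  have hβD : β ≤ Module.rank K D := by
    by_contra! h
    exact (add_lt_of_lt hβ hW h).not_ge (hβC.trans hquot)
  obtain ⟨U, hUD, hU⟩ := D.exists_le_rank_eq hβD
  refine ⟨W ⊔ U, le_sup_left, le_antisymm ?_ ?_, ?_⟩
  · calc Module.rank K (W ⊔ U : Submodule K V) ≤ Module.rank K W + Module.rank K U :=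
          rank_add_le_rank_add_rank W U
      _ = β := by rw [hU, add_eq_right hβ hW.le]
  · exact hU ▸ rank_mono le_sup_right
  · rw [sup_comm]
    exact hWC.disjoint_sup_left_of_disjoint_sup_right (hD.disjoint.symm.mono_left hUD)

theorem coe_subset_compl_union_zero_iff {C S : Submodule K V} :
    (S : Set V) ⊆ (C : Set V)ᶜ ∪ {0} ↔ Disjoint S C := by
  rw [disjoint_def]
  refine forall₂_congr fun x _ => ?_
  by_cases hx : x ∈ C <;> simp [hx]

theorem abLineable_compl {V : Type w} [AddCommGroup V] [Module ℝ V] {C : Submodule ℝ V}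
    {γ β : Cardinal.{w}} (hγβ : γ < β) (hβ : ℵ₀ ≤ β) (hβC : β ≤ Module.rank ℝ (V ⧸ C)) :
    ABLineable ((C : Set V)ᶜ) γ β := by
  simp only [ABLineable, Lineable, coe_subset_compl_union_zero_iff]
  refine ⟨?_, fun W hW hWC => exists_le_rank_eq_disjoint hWC (hW ▸ hγβ) hβ hβC⟩
  obtain ⟨S, -, hS, hSC⟩ := exists_le_rank_eq_disjoint (W := ⊥) disjoint_bot_left
    (by rw [rank_bot]; exact aleph0_pos.trans_le hβ) hβ hβC
  obtain ⟨U, hUS, hU⟩ := S.exists_le_rank_eq (hS ▸ hγβ.le)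
  exact ⟨U, hU, hSC.mono_left hUS⟩

end Submodule

theorem LinearMap.exists_not_continuous {E : Type*} [NormedAddCommGroup E] [NormedSpace ℝ E]
    (hE : ℵ₀ ≤ Module.rank ℝ E) : ∃ ψ : E →ₗ[ℝ] ℝ, ¬Continuous ψ := by
  let b := Module.Basis.ofVectorSpace ℝ E
  have : Infinite (Module.Basis.ofVectorSpaceIndex ℝ E) :=
    Cardinal.infinite_iff.2 (b.mk_eq_rank''.symm ▸ hE)
  let g := Infinite.natEmbedding (Module.Basis.ofVectorSpaceIndex ℝ E)
  let ψ := b.constr ℝ fun i => Function.extend g (fun n : ℕ => (n : ℝ)) 0 i * ‖b i‖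
  refine ⟨ψ, fun hψ => ?_⟩
  let Ψ : E →L[ℝ] ℝ := ⟨ψ, hψ⟩
  obtain ⟨n, hn⟩ := exists_nat_gt ‖Ψ‖
  have hb : 0 < ‖b (g n)‖ := norm_pos_iff.2 (b.ne_zero _)
  have hΨ : Ψ (b (g n)) = n * ‖b (g n)‖ := by
    simp [Ψ, ψ, b.constr_basis, g.injective.extend_apply]
  have hle := Ψ.le_opNorm (b (g n))
  rw [hΨ, Real.norm_eq_abs, abs_of_nonneg (by positivity)] at hle
  exact hn.not_ge (le_of_mul_le_mul_right hle hb)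

namespace MultilinearMap

theorem exists_not_continuous {ι E : Type*} [Fintype ι] [DecidableEq ι]
    [NormedAddCommGroup E] [NormedSpace ℝ E] [Nontrivial E] (i₀ : ι) {ψ : E →ₗ[ℝ] ℝ}
    (hψ : ¬Continuous ψ) : ∃ μ : MultilinearMap ℝ (fun _ : ι => E) ℝ, ¬Continuous μ := by
  obtain ⟨e, he⟩ := exists_ne (0 : E)
  obtain ⟨L, hL⟩ := SeparatingDual.exists_eq_one (R := ℝ) he
  let μ := (MultilinearMap.mkPiAlgebra ℝ ι ℝ).compLinearMap
    (Function.update (fun _ => (L : E →ₗ[ℝ] ℝ)) i₀ ψ)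
  have hμψ : ∀ x, μ (Function.update (fun _ => e) i₀ x) = ψ x := by
    intro x
    simp only [μ, compLinearMap_apply, mkPiAlgebra_apply]
    rw [Fintype.prod_eq_single i₀ fun i hi => by simp [hi, hL]]
    simp
  refine ⟨μ, fun hμ => hψ ?_⟩
  have hψμ : (ψ : E → ℝ) = μ ∘ fun x => Function.update (fun _ => e) i₀ x :=
    funext fun x => (hμψ x).symm
  exact hψμ ▸ hμ.comp (continuous_const.update i₀ continuous_id)

def smulRightₗ {R ι : Type*} {M : ι → Type*} {N : Type*} [CommSemiring R]
    [∀ i, AddCommMonoid (M i)] [∀ i, Module R (M i)] [AddCommMonoid N] [Module R N]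
    (f : MultilinearMap R M R) : N →ₗ[R] MultilinearMap R M N where
  toFun := f.smulRight
  map_add' _ _ := by ext; simp [smul_add]
  map_smul' _ _ := by
    ext
    simp only [smulRight_apply, smul_apply, RingHom.id_apply]
    exact smul_comm _ _ _

variable {ι : Type w} {E : ι → Type u} [∀ i, NormedAddCommGroup (E i)] [∀ i, NormedSpace ℝ (E i)]
  {F : Type v} [NormedAddCommGroup F] [NormedSpace ℝ F]

variable (E F) in
def continuousSubmodule : Submodule ℝ (MultilinearMap ℝ E F) :=
  LinearMap.range (ContinuousMultilinearMap.toMultilinearMapLinear (R' := ℝ))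

theorem mem_continuousSubmodule {f : MultilinearMap ℝ E F} :
    f ∈ continuousSubmodule E F ↔ Continuous f :=
  ⟨by rintro ⟨g, rfl⟩; exact g.cont, fun hf => ⟨⟨f, hf⟩, rfl⟩⟩

theorem lift_rank_le_rank_quotient_continuousSubmodule [Fintype ι]
    {μ : MultilinearMap ℝ E ℝ} (hμ : ¬Continuous μ) :
    lift.{max w u} (Module.rank ℝ F) ≤
      Module.rank ℝ (MultilinearMap ℝ E F ⧸ continuousSubmodule E F) := by
  have hinj : Function.Injective ((continuousSubmodule E F).mkQ ∘ₗ μ.smulRightₗ) := by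
    refine injective_iff_map_eq_zero _ |>.2 fun v hv => ?_
    by_contra hv0
    rw [LinearMap.comp_apply, Submodule.mkQ_apply, Submodule.Quotient.mk_eq_zero,
      mem_continuousSubmodule] at hv
    obtain ⟨φ, hφ⟩ := SeparatingDual.exists_eq_one (R := ℝ) hv0
    have hμφ : (μ : _ → ℝ) = φ ∘ μ.smulRight v := funext fun x => by simp [smulRight_apply, hφ]
    exact hμ (hμφ ▸ φ.continuous.comp hv)
  have h := LinearMap.lift_rank_le_of_injective _ hinj
  rw [lift_id'.{v, max w u}] at h
  rwa [← congrFun lift_umax.{v, max w u}]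

end MultilinearMap

/-- Let `E`, `F` be real normed spaces with `𝔠 < dim E` and `dim F > 2 ^ dim E`,
and let `m` be a positive integer. Then `NL(^m E; F)` is `(γ, dim F)`-lineable in `L(^m E; F)`
for every cardinal `γ < dim E` (with universe lifts to compare cardinals). -/
theorem statement14 (E : Type u) (F : Type v) [NormedAddCommGroup E] [NormedSpace ℝ E]
    [NormedAddCommGroup F] [NormedSpace ℝ F]
    (hE : Cardinal.continuum < Module.rank ℝ E)
    (hEF : Cardinal.lift.{v} (2 ^ Module.rank ℝ E) < Cardinal.lift.{u} (Module.rank ℝ F))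
    (m : ℕ) (hm : 0 < m)
    (γ : Cardinal.{max u v}) (hγ : γ < Cardinal.lift.{v} (Module.rank ℝ E)) :
    ABLineable
      {T : MultilinearMap ℝ (fun _ : Fin m => E) F | ¬Continuous ⇑T}
      γ (Cardinal.lift.{u} (Module.rank ℝ F)) := by
  have hE₀ : ℵ₀ ≤ Module.rank ℝ E := (aleph0_lt_continuum.trans hE).le
  have : Nontrivial E := rank_pos_iff_nontrivial.1 (aleph0_pos.trans_le hE₀)
  obtain ⟨ψ, hψ⟩ := LinearMap.exists_not_continuous hE₀
  obtain ⟨μ, hμ⟩ := MultilinearMap.exists_not_continuous (⟨0, hm⟩ : Fin m) hψ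
  have hEF' : lift.{v} (Module.rank ℝ E) < lift.{u} (Module.rank ℝ F) :=
    (lift_strictMono (cantor _)).trans hEF
  have hNL : {T : MultilinearMap ℝ (fun _ : Fin m => E) F | ¬Continuous ⇑T} =
      (MultilinearMap.continuousSubmodule (fun _ : Fin m => E) F : Set _)ᶜ :=
    Set.ext fun _ => MultilinearMap.mem_continuousSubmodule.not.symm
  rw [hNL]
  exact Submodule.abLineable_compl (hγ.trans hEF') ((aleph0_le_lift.2 hE₀).trans hEF'.le)
    (MultilinearMap.lift_rank_le_rank_quotient_continuousSubmodule hμ)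
end

section
/- Let E be an infinite-dimensional Banach space over ℝ, let Γ be an infinite index set, and let H = ℓ_2(Γ). If the set 𝓛(E; H) \ Π_1(E; H) of continuous linear operators from E to H that are not absolutely summing is nonempty, then it is card(Γ)-lineable in the space of continuous linear operators from E to H: (𝓛(E; H) \ Π_1(E; H)) ∪ {0} contains a linear subspace of dimension card(Γ). -/
universe u w

/-- A continuous linear operator `T : E → F` between real normed spaces is absolutely summing
if for every sequence `(x j)` in `E` such that `∑ j, |φ (x j)| < ∞` for every continuous linear
functional `φ` on `E`, one has `∑ j, ‖T (x j)‖ < ∞`. -/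
def AbsolutelySumming {E : Type u} {F : Type w} [NormedAddCommGroup E] [NormedSpace ℝ E]
    [NormedAddCommGroup F] [NormedSpace ℝ F] (T : E →L[ℝ] F) : Prop :=
  ∀ x : ℕ → E, (∀ φ : E →L[ℝ] ℝ, Summable fun j => |φ (x j)|) →
    Summable fun j => ‖T (x j)‖

/-!
Splitting `Γ ≃ Γ × Γ` gives `|Γ|` copies of `ℓ₂(Γ)` inside `ℓ₂(Γ)` on pairwise disjoint
sets of coordinates: extensions by zero `ιᵧ` with left inverses `πᵧ` (restrictions) such that
`πᵧ ∘ ιᵧ' = 0` for `γ ≠ γ'`. For a non-absolutely-summing `T`, the operators `ιᵧ ∘ T` are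
then linearly independent, and `πᵧ` recovers `c γ • T` from any combination
`∑ c γ • ιᵧ ∘ T`. Since absolutely summing operators form a left ideal, a nonzero
combination that was absolutely summing would make `T` absolutely summing.
-/

open Function Set
open scoped ENNReal

namespace lp

variable {𝕜 E ι κ : Type*} [NormedField 𝕜] [NormedAddCommGroup E] [NormedSpace 𝕜 E]
  {p : ℝ≥0∞} [Fact (1 ≤ p)] {j : ι → κ}

lemma toReal_pos_of_ne_top (hp : p ≠ ∞) : 0 < p.toReal :=
  ENNReal.toReal_pos (zero_lt_one.trans_le Fact.out).ne' hp

lemma norm_extend_zero_rpow (hp : p ≠ ∞) (f : ι → E) :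
    (fun k => ‖extend j f 0 k‖ ^ p.toReal) = extend j (fun i => ‖f i‖ ^ p.toReal) 0 := by
  funext k
  rw [apply_extend (fun x : E => ‖x‖ ^ p.toReal)]
  simp [comp_def, Real.zero_rpow (toReal_pos_of_ne_top hp).ne']
  rfl

lemma memℓp_comp (hp : p ≠ ∞) (hj : Injective j) (f : lp (fun _ : κ => E) p) :
    Memℓp (f ∘ j) p :=
  memℓp_gen (((lp.memℓp f).summable (toReal_pos_of_ne_top hp)).comp_injective hj)

lemma memℓp_extend_zero (hp : p ≠ ∞) (hj : Injective j) (f : lp (fun _ : ι => E) p) :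
    Memℓp (extend j f 0) p := by
  refine memℓp_gen ?_
  rw [norm_extend_zero_rpow hp, summable_extend_zero hj]
  exact (lp.memℓp f).summable (toReal_pos_of_ne_top hp)

noncomputable def compCLM (hp : p ≠ ∞) (hj : Injective j) :
    lp (fun _ : κ => E) p →L[𝕜] lp (fun _ : ι => E) p :=
  LinearMap.mkContinuous
    { toFun f := ⟨f ∘ j, memℓp_comp hp hj f⟩
      map_add' _ _ := rfl
      map_smul' _ _ := rfl }
    1 fun f => by
      rw [one_mul]
      refine norm_le_of_tsum_le (toReal_pos_of_ne_top hp) (norm_nonneg f) ?_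
      rw [norm_rpow_eq_tsum (toReal_pos_of_ne_top hp)]
      exact tsum_comp_le_tsum_of_inj ((lp.memℓp f).summable (toReal_pos_of_ne_top hp))
        (fun _ => by positivity) hj

noncomputable def extendZeroCLM (hp : p ≠ ∞) (hj : Injective j) :
    lp (fun _ : ι => E) p →L[𝕜] lp (fun _ : κ => E) p :=
  LinearMap.mkContinuous
    { toFun f := ⟨extend j f 0, memℓp_extend_zero hp hj f⟩
      map_add' f g := by
        ext1
        change extend j (⇑f + ⇑g) 0 = extend j f 0 + extend j g 0
        simpa using extend_add j (⇑f) (⇑g) (0 : κ → E) 0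
      map_smul' c f := by
        ext1
        change extend j (c • ⇑f) 0 = c • extend j f 0
        simpa using extend_smul c j f (0 : κ → E) }
    1 fun f => by
      rw [one_mul]
      refine norm_le_of_tsum_le (toReal_pos_of_ne_top hp) (norm_nonneg f) ?_
      rw [norm_rpow_eq_tsum (toReal_pos_of_ne_top hp)]
      exact (congrArg tsum (norm_extend_zero_rpow hp f)).trans_le (tsum_extend_zero hj _).le

@[simp]
lemma compCLM_apply (hp : p ≠ ∞) (hj : Injective j) (f : lp (fun _ : κ => E) p) (i : ι) :
    compCLM (𝕜 := 𝕜) hp hj f i = f (j i) := rfl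

@[simp]
lemma extendZeroCLM_apply (hp : p ≠ ∞) (hj : Injective j) (f : lp (fun _ : ι => E) p)
    (k : κ) :
    extendZeroCLM (𝕜 := 𝕜) hp hj f k = extend j f 0 k := rfl

lemma compCLM_comp_extendZeroCLM (hp : p ≠ ∞) (hj : Injective j) :
    (compCLM hp hj).comp (extendZeroCLM hp hj) =
      ContinuousLinearMap.id 𝕜 (lp (fun _ : ι => E) p) := by
  ext f i
  simp [hj.extend_apply]

lemma compCLM_comp_extendZeroCLM_of_disjoint {ι' : Type*} {j' : ι' → κ} (hp : p ≠ ∞)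
    (hj : Injective j) (hj' : Injective j') (hjj' : Disjoint (range j) (range j')) :
    (compCLM hp hj).comp (extendZeroCLM hp hj') = (0 : lp (fun _ : ι' => E) p →L[𝕜] _) := by
  ext f i
  rw [ContinuousLinearMap.comp_apply, compCLM_apply, extendZeroCLM_apply,
    extend_apply' _ _ _ fun ⟨i', hi'⟩ => hjj'.ne_of_mem (mem_range_self i) ⟨i', hi'⟩ rfl]
  rfl

end lp

namespace AbsolutelySumming

variable {E F G : Type*} [NormedAddCommGroup E] [NormedSpace ℝ E] [NormedAddCommGroup F]
  [NormedSpace ℝ F] [NormedAddCommGroup G] [NormedSpace ℝ G]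

lemma zero : AbsolutelySumming (0 : E →L[ℝ] F) := fun _ _ => by
  simp [summable_zero]

lemma comp {T : E →L[ℝ] F} (hT : AbsolutelySumming T) (A : F →L[ℝ] G) :
    AbsolutelySumming (A.comp T) := fun x hx =>
  .of_nonneg_of_le (fun _ => norm_nonneg _) (fun n => A.le_opNorm (T (x n)))
    ((hT x hx).mul_left _)

lemma of_smul {T : E →L[ℝ] F} {c : ℝ} (hc : c ≠ 0) (hT : AbsolutelySumming (c • T)) :
    AbsolutelySumming T := by
  simpa [smul_smul, mul_inv_cancel₀ hc] using hT.comp (c⁻¹ • ContinuousLinearMap.id ℝ F)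

end AbsolutelySumming

section Biorthogonal

variable {E F G Γ : Type*} [NormedAddCommGroup E] [NormedSpace ℝ E] [NormedAddCommGroup F]
  [NormedSpace ℝ F] [NormedAddCommGroup G] [NormedSpace ℝ G]
  {ι : Γ → F →L[ℝ] G} {π : Γ → G →L[ℝ] F}

lemma comp_linearCombination_comp [DecidableEq Γ]
    (hπι : ∀ γ γ',
      (π γ).comp (ι γ') = if γ = γ' then ContinuousLinearMap.id ℝ F else 0)
    (T : E →L[ℝ] F) (c : Γ →₀ ℝ) (γ : Γ) :
    (π γ).comp (Finsupp.linearCombination ℝ (fun γ' => (ι γ').comp T) c) = c γ • T := by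
  have hπιT : ∀ γ', (π γ).comp ((ι γ').comp T) = if γ = γ' then T else 0 := fun γ' => by
    rw [← ContinuousLinearMap.comp_assoc, hπι]
    split_ifs <;> simp
  simp [Finsupp.linearCombination_apply, Finsupp.sum, ContinuousLinearMap.comp_finsetSum, hπιT]
  intro hc
  rw [hc, zero_smul]

lemma linearIndependent_comp [DecidableEq Γ]
    (hπι : ∀ γ γ',
      (π γ).comp (ι γ') = if γ = γ' then ContinuousLinearMap.id ℝ F else 0)
    {T : E →L[ℝ] F} (hT : T ≠ 0) : LinearIndependent ℝ fun γ => (ι γ).comp T := by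
  refine linearIndependent_iff.mpr fun c hc => Finsupp.ext fun γ => ?_
  have hcγ := comp_linearCombination_comp hπι T c γ
  rw [hc, ContinuousLinearMap.comp_zero, eq_comm, smul_eq_zero] at hcγ
  exact hcγ.resolve_right hT

lemma not_absolutelySumming_of_mem_span [DecidableEq Γ]
    (hπι : ∀ γ γ',
      (π γ).comp (ι γ') = if γ = γ' then ContinuousLinearMap.id ℝ F else 0)
    {T : E →L[ℝ] F} (hT : ¬AbsolutelySumming T) {S : E →L[ℝ] G}
    (hS : S ∈ Submodule.span ℝ (range fun γ => (ι γ).comp T)) (hS0 : S ≠ 0) :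
    ¬AbsolutelySumming S := by
  rw [← Finsupp.range_linearCombination] at hS
  obtain ⟨c, rfl⟩ := hS
  obtain ⟨γ, hγ⟩ : ∃ γ, c γ ≠ 0 := by
    by_contra! hc
    rw [show c = 0 from Finsupp.ext hc, map_zero] at hS0
    exact hS0 rfl
  intro hAS
  have := hAS.comp (π γ)
  rw [comp_linearCombination_comp hπι] at this
  exact hT (this.of_smul hγ)

end Biorthogonal

lemma lp.exists_biorthogonal {𝕜 E Γ : Type*} [NormedField 𝕜] [NormedAddCommGroup E]
    [NormedSpace 𝕜 E]
    {p : ℝ≥0∞} [Fact (1 ≤ p)] (hp : p ≠ ∞) [Infinite Γ] [DecidableEq Γ] :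
    ∃ (ι : Γ → lp (fun _ : Γ => E) p →L[𝕜] lp (fun _ : Γ => E) p)
      (π : Γ → lp (fun _ : Γ => E) p →L[𝕜] lp (fun _ : Γ => E) p),
      ∀ γ γ', (π γ).comp (ι γ') = if γ = γ' then ContinuousLinearMap.id 𝕜 _ else 0 := by
  obtain ⟨e⟩ : Nonempty (Γ × Γ ≃ Γ) := Cardinal.eq.mp <| by
    rw [Cardinal.mk_prod, Cardinal.lift_id, Cardinal.mul_eq_self (Cardinal.aleph0_le_mk Γ)]
  have he : ∀ γ, Injective (e ∘ Prod.mk γ) := fun γ =>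
    e.injective.comp (Prod.mk_right_injective γ)
  refine ⟨fun γ => extendZeroCLM hp (he γ), fun γ => compCLM hp (he γ), fun γ γ' => ?_⟩
  split_ifs with h
  · subst h
    exact compCLM_comp_extendZeroCLM hp (he γ)
  · refine compCLM_comp_extendZeroCLM_of_disjoint hp (he γ) (he γ') ?_
    rw [Set.disjoint_iff]
    rintro _ ⟨⟨a, rfl⟩, ⟨b, hb⟩⟩
    exact h (congrArg Prod.fst (e.injective hb)).symm

theorem statement15_general (E : Type u) [NormedAddCommGroup E] [NormedSpace ℝ E]
    (Γ : Type w) [Infinite Γ]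
    (hne : ∃ T : E →L[ℝ] lp (fun _ : Γ => ℝ) 2, ¬AbsolutelySumming T) :
    ∃ S : Submodule ℝ (E →L[ℝ] lp (fun _ : Γ => ℝ) 2),
      Module.rank ℝ ↥S = Cardinal.lift.{u} (Cardinal.mk Γ) ∧
      ∀ T ∈ S, T ≠ 0 → ¬AbsolutelySumming T := by
  classical
  obtain ⟨T, hT⟩ := hne
  obtain ⟨ι, π, hπι⟩ :=
    lp.exists_biorthogonal (𝕜 := ℝ) (E := ℝ) (p := 2) (Γ := Γ) ENNReal.ofNat_ne_top
  have hT0 : T ≠ 0 := by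
    rintro rfl
    exact hT AbsolutelySumming.zero
  have hli := linearIndependent_comp hπι hT0
  refine ⟨Submodule.span ℝ (range fun γ => (ι γ).comp T), ?_,
    fun S hS hS0 => not_absolutelySumming_of_mem_span hπι hT hS hS0⟩
  rw [rank_span hli, ← Cardinal.lift_id'.{w, u} (Cardinal.mk (range _)),
    Cardinal.mk_range_eq_of_injective hli.injective, Cardinal.lift_umax.{w, u}]

/-- Let `E` be an infinite-dimensional real Banach space, `Γ` an infinite index
set and `H = ℓ₂(Γ)`. If the set `𝓛(E; H) \ Π₁(E; H)` of continuous linear operators from `E`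
to `H` that are not absolutely summing is nonempty, then it is `card Γ`-lineable in the space
of continuous linear operators from `E` to `H`. -/
theorem statement15 (E : Type u) [NormedAddCommGroup E] [NormedSpace ℝ E] [CompleteSpace E]
    (hE : ¬FiniteDimensional ℝ E) (Γ : Type w) [Infinite Γ]
    (hne : ∃ T : E →L[ℝ] lp (fun _ : Γ => ℝ) 2, ¬AbsolutelySumming T) :
    ∃ S : Submodule ℝ (E →L[ℝ] lp (fun _ : Γ => ℝ) 2),
      Module.rank ℝ ↥S = Cardinal.lift.{u} (Cardinal.mk Γ) ∧
      ∀ T ∈ S, T ≠ 0 → ¬AbsolutelySumming T :=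
  statement15_general E Γ hne
end
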